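/- (Sufficient decrease of the merit function along VF-iDCA iterates.) Fix ρ > 0 and α > 0. For a point z = (x,r) ∈ ℝ^n × ℝ^J with r ≥ 0, a base point z₀ ∈ ℝ^n × ℝ^J, and a vector γ ∈ ℝ^J such that −γ is a subgradient of v at some r_γ ≥ 0 relative to ℝ^J_+, define E_α(z, z₀, γ) := L(x) + (ρ/4)‖z − z₀‖² + α · max{0, l(x) + ⟨γ, r − r_γ⟩ − v(r_γ), max_{1≤i≤J}(P_i(x) − r_i)} (here l(x) + ⟨γ, r − r_γ⟩ − v(r_γ) equals l(x) + ⟨γ, r⟩ + v*(−γ), where v* is the Fenchel conjugate of v over ℝ^J_+, by the Fenchel equality). Let z^{k−1} = (x^{k−1}, r^{k−1}), z^k = (x^k, r^k), z^{k+1} = (x^{k+1}, r^{k+1}) ∈ ℝ^n × ℝ^J with r^{k−1} ≥ 0, r^k ≥ 0, r^{k+1} ≥ 0, and let γ^{k−1}, γ^k ∈ ℝ^J be such that −γ^{k−1} is a subgradient of v at r^{k−1} relative to ℝ^J_+ (i.e., v(r') ≥ v(r^{k−1}) + ⟨−γ^{k−1}, r' − r^{k−1}⟩ for all r' ≥ 0)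 and −γ^k is a subgradient of v at r^k relative to ℝ^J_+. Define φ_k(x,r) := L(x) + (ρ/2)‖(x,r) − z^k‖² + α · max{0, l(x) − v(r^k) + ⟨γ^k, r − r^k⟩, max_{1≤i≤J}(P_i(x) − r_i)}, and assume the estimate φ_k(z^{k+1}) ≤ φ_k(z^k) + (ρ/4)‖z^k − z^{k−1}‖². Then E_α(z^k, z^{k−1}, γ^{k−1}) ≥ E_α(z^{k+1}, z^k, γ^k) + (ρ/4)‖z^{k+1} − z^k‖², where E_α(z^k, z^{k−1}, γ^{k−1}) is computed with r_γ = r^{k−1} and E_α(z^{k+1}, z^k, γ^k) is computed with r_γ = r^k. -/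

import Mathlib

/-! Adding `(ρ/4)‖z^{k+1} - z^k‖²` to `E_α(z^{k+1}, z^k, γ^k)` gives exactly `φ_k(z^{k+1})`.
At `z^k` the proximal term of `φ_k` vanishes, and the subgradient inequality for `-γ^{k-1}`
at `r^k` bounds the value-function term `l(x^k) - v(r^k)` of `φ_k(z^k)` by the corresponding
term `l(x^k) + ⟨γ^{k-1}, r^k - r^{k-1}⟩ - v(r^{k-1})` of `E_α(z^k, z^{k-1}, γ^{k-1})`. -/

open scoped InnerProductSpace
open Filter Topology

noncomputable section

/-- Euclidean space `ℝ^m`. -/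
abbrev Eu (m : ℕ) : Type := EuclideanSpace ℝ (Fin m)

/-- Subgradient set (in the sense of convex analysis) of `f` at `x`. -/
def Subgrad {E : Type*} [NormedAddCommGroup E] [InnerProductSpace ℝ E]
    (f : E → ℝ) (x : E) : Set E :=
  {g | ∀ y, f x + ⟪g, y - x⟫_ℝ ≤ f y}

/-- Feasible region `F(r) = {x : P_i(x) ≤ r_i, i = 1,…,J}`. -/
def Feas {n J : ℕ} (P : Fin J → Eu n → ℝ) (r : Eu J) : Set (Eu n) :=
  {x | ∀ i, P i x ≤ r i}

/-- `S_p(λ)`: global minimizers of `x' ↦ l(x') + Σ_i λ_i P_i(x')`. -/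
def Sp {n J : ℕ} (l : Eu n → ℝ) (P : Fin J → Eu n → ℝ) (lam : Eu J) : Set (Eu n) :=
  {x | ∀ x', l x + ∑ i, lam i * P i x ≤ l x' + ∑ i, lam i * P i x'}

/-- `S_c(r)`: global minimizers of `l` over `F(r)`. -/
def Sc {n J : ℕ} (l : Eu n → ℝ) (P : Fin J → Eu n → ℝ) (r : Eu J) : Set (Eu n) :=
  {x | x ∈ Feas P r ∧ ∀ x' ∈ Feas P r, l x ≤ l x'}

/-- The multiplier set `M(x,r)`. -/
def Mset {n J : ℕ} (l : Eu n → ℝ) (P : Fin J → Eu n → ℝ) (x : Eu n) (r : Eu J) :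
    Set (Eu J) :=
  {lam | (∀ i, 0 ≤ lam i) ∧
    (∃ u ∈ Subgrad l x, ∃ v : Fin J → Eu n,
      (∀ i, v i ∈ Subgrad (P i) x) ∧ u + ∑ i, lam i • v i = 0) ∧
    (∀ i, lam i * (P i x - r i) = 0)}

/-- The value function `v(r) = inf { l(x) : x ∈ F(r) }`. -/
def vfun {n J : ℕ} (l : Eu n → ℝ) (P : Fin J → Eu n → ℝ) (r : Eu J) : ℝ :=
  sInf (l '' Feas P r)

/-- The merit function
`E_α(z, z₀, γ) = L(x) + (ρ/4)‖z − z₀‖² + α·max{0, l(x) + ⟨γ, r − r_γ⟩ − v(r_γ), max_i (P_i(x) − r_i)}`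
(the middle term equals `l(x) + ⟨γ, r⟩ + v*(−γ)` by the Fenchel equality). -/
def Emerit {n J : ℕ} (L l : Eu n → ℝ) (P : Fin J → Eu n → ℝ) (ρ α : ℝ)
    (x : Eu n) (r : Eu J) (x0 : Eu n) (r0 : Eu J) (γ rγ : Eu J) : ℝ :=
  L x + ρ / 4 * (‖x - x0‖ ^ 2 + ‖r - r0‖ ^ 2) +
    α * max 0 (max (l x + ⟪γ, r - rγ⟫_ℝ - vfun l P rγ) (⨆ i, (P i x - r i)))

/-- The strongly convex subproblem objective
`φ_k(x,r) = L(x) + (ρ/2)‖(x,r) − z^k‖² + α·max{0, l(x) − v(r^k) + ⟨γ^k, r − r^k⟩, max_i (P_i(x) − r_i)}`. -/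
def phik {n J : ℕ} (L l : Eu n → ℝ) (P : Fin J → Eu n → ℝ) (ρ α : ℝ)
    (xk : Eu n) (rk : Eu J) (γk : Eu J) (x : Eu n) (r : Eu J) : ℝ :=
  L x + ρ / 2 * (‖x - xk‖ ^ 2 + ‖r - rk‖ ^ 2) +
    α * max 0 (max (l x - vfun l P rk + ⟪γk, r - rk⟫_ℝ) (⨆ i, (P i x - r i)))

section MeritFunction

variable {n J : ℕ} (L l : Eu n → ℝ) (P : Fin J → Eu n → ℝ) (ρ : ℝ)

theorem Emerit_add_sq_eq_phik (α : ℝ) (x xk : Eu n) (r rk γk : Eu J) :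
    Emerit L l P ρ α x r xk rk γk rk + ρ / 4 * (‖x - xk‖ ^ 2 + ‖r - rk‖ ^ 2) =
      phik L l P ρ α xk rk γk x r := by
  rw [Emerit, phik, add_sub_right_comm (l x)]
  ring

theorem phik_self_add_sq_le_Emerit {α : ℝ} (hα : 0 ≤ α) (xkm xk : Eu n) (rkm rk γkm γk : Eu J)
    (hv : vfun l P rkm + ⟪-γkm, rk - rkm⟫_ℝ ≤ vfun l P rk) :
    phik L l P ρ α xk rk γk xk rk + ρ / 4 * (‖xk - xkm‖ ^ 2 + ‖rk - rkm‖ ^ 2) ≤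
      Emerit L l P ρ α xk rk xkm rkm γkm rkm := by
  rw [inner_neg_left] at hv
  have hterm : l xk - vfun l P rk ≤ l xk + ⟪γkm, rk - rkm⟫_ℝ - vfun l P rkm := by
    linarith
  have hmax := mul_le_mul_of_nonneg_left
    (max_le_max_left 0 (max_le_max_right (⨆ i, (P i xk - rk i)) hterm)) hα
  simp only [phik, Emerit, sub_self, norm_zero, inner_zero_right, add_zero]
  linarith

end MeritFunction

theorem stmt11_general {n J : ℕ}
    (L l : Eu n → ℝ) (P : Fin J → Eu n → ℝ)
    (ρ α : ℝ) (hα : 0 < α)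
    (xkm xk xkp : Eu n) (rkm rk rkp : Eu J)
    (hrk : ∀ i, 0 ≤ rk i)
    (γkm γk : Eu J)
    (hγkm : ∀ r' : Eu J, (∀ i, 0 ≤ r' i) →
      vfun l P rkm + ⟪-γkm, r' - rkm⟫_ℝ ≤ vfun l P r')
    (hest : phik L l P ρ α xk rk γk xkp rkp ≤
      phik L l P ρ α xk rk γk xk rk + ρ / 4 * (‖xk - xkm‖ ^ 2 + ‖rk - rkm‖ ^ 2)) :
    Emerit L l P ρ α xkp rkp xk rk γk rk + ρ / 4 * (‖xkp - xk‖ ^ 2 + ‖rkp - rk‖ ^ 2) ≤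
      Emerit L l P ρ α xk rk xkm rkm γkm rkm := by
  rw [Emerit_add_sq_eq_phik]
  exact hest.trans
    (phik_self_add_sq_le_Emerit L l P ρ hα.le xkm xk rkm rk γkm γk (hγkm rk hrk))

theorem stmt11 {n J : ℕ} (hn : 1 ≤ n) (hJ : 1 ≤ J)
    (L l : Eu n → ℝ) (P : Fin J → Eu n → ℝ)
    (hLcv : ConvexOn ℝ Set.univ L) (hLc : Continuous L)
    (hlcv : ConvexOn ℝ Set.univ l) (hlc : Continuous l)
    (hPcv : ∀ i, ConvexOn ℝ Set.univ (P i)) (hPc : ∀ i, Continuous (P i))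
    (hPnn : ∀ i x, 0 ≤ P i x)
    (hFne : ∀ r : Eu J, (∀ i, 0 ≤ r i) → (Feas P r).Nonempty)
    (hbdd : ∀ r : Eu J, (∀ i, 0 ≤ r i) → BddBelow (l '' Feas P r))
    (ρ α : ℝ) (hρ : 0 < ρ) (hα : 0 < α)
    (xkm xk xkp : Eu n) (rkm rk rkp : Eu J)
    (hrkm : ∀ i, 0 ≤ rkm i) (hrk : ∀ i, 0 ≤ rk i) (hrkp : ∀ i, 0 ≤ rkp i)
    (γkm γk : Eu J)
    (hγkm : ∀ r' : Eu J, (∀ i, 0 ≤ r' i) →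
      vfun l P rkm + ⟪-γkm, r' - rkm⟫_ℝ ≤ vfun l P r')
    (hγk : ∀ r' : Eu J, (∀ i, 0 ≤ r' i) →
      vfun l P rk + ⟪-γk, r' - rk⟫_ℝ ≤ vfun l P r')
    (hest : phik L l P ρ α xk rk γk xkp rkp ≤
      phik L l P ρ α xk rk γk xk rk + ρ / 4 * (‖xk - xkm‖ ^ 2 + ‖rk - rkm‖ ^ 2)) :
    Emerit L l P ρ α xkp rkp xk rk γk rk + ρ / 4 * (‖xkp - xk‖ ^ 2 + ‖rkp - rk‖ ^ 2) ≤
      Emerit L l P ρ α xk rk xkm rkm γkm rkm :=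
  stmt11_general L l P ρ α hα xkm xk xkp rkm rk rkp hrk γkm γk hγkm hest
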